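/- arXiv:1705.03673 — 5 statements merged into one kernel-verified Lean document; each statement's English description precedes it below -/
import Mathlib

section
/- Let G = (V, A) be a finite directed graph with distinct vertices s and t, let p ≥ 1 and k ≥ 0. For K ⊆ A, let G(K,p) denote the directed multigraph obtained from G by replacing each arc in K by p parallel copies. Then G admits p s-t walks sharing at most k arcs if and only if there exists K ⊆ A with |K| ≤ k such that G(K,p) admits p s-t walks sharing no arc. Moreover, for any α ≥ 1, the same equivalence holds when all walks are additionally required to have length at most α. -/
namespace PaperRCA

/-- A walk in a directed graph with arc relation `A`: a nonempty list of vertices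
in which each consecutive pair is an arc. -/
def IsDiWalk {V : Type*} (A : V → V → Prop) (w : List V) : Prop :=
  w ≠ [] ∧ w.Chain' A

/-- The list of arcs of a walk. -/
def walkArcs {V : Type*} (w : List V) : List (V × V) := w.zip w.tail

/-- An arc `a` is shared by the family of walks `W` if it occurs at the same
position in two distinct walks of the family. -/
def SharedArc {V : Type*} {p : ℕ} (W : Fin p → List V) (a : V × V) : Prop :=
  ∃ i j : Fin p, i ≠ j ∧ ∃ r : ℕ,
    (walkArcs (W i))[r]? = some a ∧ (walkArcs (W j))[r]? = some a

/-- A walk in a directed multigraph with arc (edge) type `E`, tail map `tl` and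
head map `hd`, from `s` to `t`: a nonempty list of arcs, consecutive arcs being
incident, the first arc starting at `s` and the last ending at `t`. -/
def IsDiMultiWalk {V E : Type*} (tl hd : E → V) (s t : V) (es : List E) : Prop :=
  es.head?.map tl = some s ∧ es.getLast?.map hd = some t ∧
  es.Chain' (fun e f => hd e = tl f)

/-- An individual arc copy `e` is shared by a family of multigraph walks if it
occurs at the same position in two distinct walks of the family. -/
def SharedMultiArc {E : Type*} {p : ℕ} (W : Fin p → List E) (e : E) : Prop :=
  ∃ i j : Fin p, i ≠ j ∧ ∃ r : ℕ, (W i)[r]? = some e ∧ (W j)[r]? = some e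

/-- Arcs of the multigraph `G(K,p)` obtained from the digraph `A` by replacing every
arc in `K` by `p` parallel copies: an arc is a pair `(a, c)` where `a` is an arc of
`A` and `c < p` is the index of the copy, with `c = 0` unless `a ∈ K`. -/
def MultiArcOK {V : Type*} (A : V → V → Prop) (K : Set (V × V)) (p : ℕ)
    (e : (V × V) × Fin p) : Prop :=
  A e.1.1 e.1.2 ∧ (e.1 ∈ K ∨ (e.2 : ℕ) = 0)

/-!
Walk `i` of a family sharing the arc set `K` is routed in `G(K, p)` through copy `i` of
each arc of `K` and copy `0` of every other arc. Where two walks traverse the same arc at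
the same position, that arc is shared, hence in `K`, so they use different copies.
Conversely, forgetting copies turns walks of `G(K, p)` sharing no arc copy into walks of
`G` that can share an arc only if it has two distinct copies, that is, only if it lies in
`K`. Both translations preserve lengths.
-/

section Walks

variable {V : Type*}

@[simp] lemma walkArcs_nil : walkArcs ([] : List V) = [] := rfl

@[simp] lemma walkArcs_singleton (x : V) : walkArcs [x] = [] := rfl

@[simp] lemma walkArcs_cons_cons (x y : V) (l : List V) :
    walkArcs (x :: y :: l) = (x, y) :: walkArcs (y :: l) := rfl

lemma length_walkArcs (w : List V) : (walkArcs w).length = w.length - 1 := by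
  simp [walkArcs]

lemma isChain_iff_forall_mem_walkArcs {R : V → V → Prop} :
    ∀ {w : List V}, w.IsChain R ↔ ∀ a ∈ walkArcs w, R a.1 a.2
  | [] | [_] => by simp
  | _ :: y :: l => by simp [isChain_iff_forall_mem_walkArcs (w := y :: l)]

lemma isChain_walkArcs : ∀ w : List V, (walkArcs w).IsChain (fun a b => a.2 = b.1)
  | [] | [_] | [_, _] => by simp
  | x :: y :: z :: l => by
      have := isChain_walkArcs (y :: z :: l)
      simp only [walkArcs_cons_cons] at this ⊢
      exact List.isChain_cons_cons.2 ⟨rfl, this⟩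

lemma getLast?_map_snd_walkArcs :
    ∀ {w : List V}, 2 ≤ w.length → (walkArcs w).getLast?.map Prod.snd = w.getLast?
  | [_, _], _ => by simp
  | x :: y :: z :: l, _ => by
      have := getLast?_map_snd_walkArcs (w := y :: z :: l) (by simp)
      simp only [walkArcs_cons_cons, List.getLast?_cons_cons] at this ⊢
      exact this

lemma two_le_length_of_head?_of_getLast? {w : List V} {s t : V} (hst : s ≠ t)
    (hs : w.head? = some s) (ht : w.getLast? = some t) : 2 ≤ w.length := by
  match w, hs, ht with
  | [_], hs, ht => simp_all
  | _ :: _ :: _, _, _ => simp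

lemma walkArcs_map_append_of_isChain {E : Type*} {tl hd : E → V} {t : V} :
    ∀ {es : List E}, es.IsChain (fun e f => hd e = tl f) → es.getLast?.map hd = some t →
      walkArcs (es.map tl ++ [t]) = es.map fun e => (tl e, hd e)
  | [], _, ht => by simp at ht
  | [e], _, ht => by simp_all
  | e :: f :: es, hc, ht => by
      rw [List.isChain_cons_cons] at hc
      have ih := walkArcs_map_append_of_isChain hc.2 (by simpa using ht)
      simp only [List.map_cons, List.cons_append, walkArcs_cons_cons] at ih ⊢
      rw [hc.1, ih]

lemma isDiMultiWalk_map_walkArcs {C : Type*} (c : V × V → C) {w : List V} {s t : V}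
    (hw : 2 ≤ w.length) (hs : w.head? = some s) (ht : w.getLast? = some t) :
    IsDiMultiWalk (fun e => e.1.1) (fun e => e.1.2) s t
      ((walkArcs w).map fun a => (a, c a)) := by
  refine ⟨?_, ?_, ?_⟩
  · match w, hw, hs with
    | _ :: _ :: _, _, hs => simpa using hs
  · simpa [List.getLast?_map, Option.map_map, Function.comp_def] using
      (getLast?_map_snd_walkArcs hw).trans ht
  · exact List.isChain_map _ |>.2 (isChain_walkArcs w)

lemma isDiWalk_of_isDiMultiWalk {E : Type*} {A : V → V → Prop} {tl hd : E → V} {s t : V}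
    {es : List E} (hA : ∀ e ∈ es, A (tl e) (hd e)) (h : IsDiMultiWalk tl hd s t es) :
    IsDiWalk A (es.map tl ++ [t]) ∧ (es.map tl ++ [t]).head? = some s ∧
      (es.map tl ++ [t]).getLast? = some t := by
  obtain ⟨hs, ht, hc⟩ := h
  refine ⟨⟨by simp, ?_⟩, ?_, by simp⟩
  · show List.IsChain _ _
    rw [isChain_iff_forall_mem_walkArcs, walkArcs_map_append_of_isChain hc ht]
    simpa using hA
  · match es, hs with
    | _ :: _, hs => simpa using hs

lemma rel_of_sharedArc {p : ℕ} {A : V → V → Prop} {W : Fin p → List V}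
    (hW : ∀ i, IsDiWalk A (W i)) {a : V × V} (h : SharedArc W a) : A a.1 a.2 := by
  obtain ⟨i, -, -, r, hr, -⟩ := h
  exact isChain_iff_forall_mem_walkArcs.1 (hW i).2 a (List.mem_of_getElem? hr)

end Walks

section Multigraph

variable {V : Type*} {p : ℕ}

open Classical in
noncomputable def liftWalk (K : Set (V × V)) (i : Fin p) (w : List V) : List ((V × V) × Fin p) :=
  (walkArcs w).map fun a => (a, if a ∈ K then i else ⟨0, i.pos⟩)

lemma multiArcOK_of_mem_liftWalk {A : V → V → Prop} {K : Set (V × V)} {i : Fin p}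
    {w : List V} (hw : IsDiWalk A w) {e : (V × V) × Fin p} (he : e ∈ liftWalk K i w) :
    MultiArcOK A K p e := by
  obtain ⟨a, ha, rfl⟩ := List.mem_map.1 he
  refine ⟨isChain_iff_forall_mem_walkArcs.1 hw.2 a ha, ?_⟩
  by_cases haK : a ∈ K <;> simp [haK]

lemma not_sharedMultiArc_liftWalk (W : Fin p → List V) (e : (V × V) × Fin p) :
    ¬ SharedMultiArc (fun i => liftWalk {a | SharedArc W a} i (W i)) e := by
  rintro ⟨i, j, hij, r, hi, hj⟩
  simp only [liftWalk, List.getElem?_map, Option.map_eq_some_iff] at hi hj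
  obtain ⟨a, ha, rfl⟩ := hi
  obtain ⟨b, hb, hba⟩ := hj
  obtain rfl : b = a := congrArg Prod.fst hba
  have hshared : SharedArc W b := ⟨i, j, hij, r, ha, hb⟩
  simp only [Set.mem_ofPred_eq, hshared, if_true, Prod.mk.injEq, true_and] at hba
  exact hij hba.symm

lemma setOf_sharedArc_subset {A : V → V → Prop} {K : Set (V × V)} {s t : V}
    {F : Fin p → List ((V × V) × Fin p)} (hK : ∀ i, ∀ e ∈ F i, MultiArcOK A K p e)
    (hF : ∀ i, IsDiMultiWalk (fun e => e.1.1) (fun e => e.1.2) s t (F i))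
    (hshared : ∀ e, ¬ SharedMultiArc F e) :
    {a | SharedArc (fun i => (F i).map (·.1.1) ++ [t]) a} ⊆ K := by
  rintro a ⟨i, j, hij, r, hi, hj⟩
  rw [walkArcs_map_append_of_isChain (hF i).2.2 (hF i).2.1, List.getElem?_map,
    Option.map_eq_some_iff] at hi
  rw [walkArcs_map_append_of_isChain (hF j).2.2 (hF j).2.1, List.getElem?_map,
    Option.map_eq_some_iff] at hj
  obtain ⟨e, he, rfl⟩ := hi
  obtain ⟨f, hf, hfe⟩ := hj
  have hef : e ≠ f := fun h => hshared e ⟨i, j, hij, r, he, h ▸ hf⟩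
  rcases (hK i e (List.mem_of_getElem? he)).2 with h | he0
  · exact h
  rcases (hK j f (List.mem_of_getElem? hf)).2 with h | hf0
  · simpa [← hfe] using h
  exact absurd (Prod.ext (by simpa using hfe.symm) (Fin.ext (he0.trans hf0.symm))) hef

end Multigraph

theorem walks_iff_multiWalks {V : Type*} [Finite V] (A : V → V → Prop) {s t : V}
    (hst : s ≠ t) (p k : ℕ) (P : ℕ → Prop) :
    (∃ W : Fin p → List V,
        (∀ i, IsDiWalk A (W i) ∧ (W i).head? = some s ∧ (W i).getLast? = some t ∧
          P ((W i).length - 1)) ∧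
        {a : V × V | SharedArc W a}.ncard ≤ k) ↔
      (∃ K : Set (V × V), K ⊆ {a : V × V | A a.1 a.2} ∧ K.ncard ≤ k ∧
        ∃ F : Fin p → List ((V × V) × Fin p),
          (∀ i, (∀ e ∈ F i, MultiArcOK A K p e) ∧
            IsDiMultiWalk (fun e => e.1.1) (fun e => e.1.2) s t (F i) ∧ P (F i).length) ∧
          ∀ e, ¬ SharedMultiArc F e) := by
  constructor
  · rintro ⟨W, hW, hk⟩
    refine ⟨_, fun a => rel_of_sharedArc (fun i => (hW i).1), hk,
      fun i => liftWalk _ i (W i), fun i => ?_, not_sharedMultiArc_liftWalk W⟩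
    obtain ⟨hwalk, hs, ht, hP⟩ := hW i
    exact ⟨fun e => multiArcOK_of_mem_liftWalk hwalk,
      isDiMultiWalk_map_walkArcs _ (two_le_length_of_head?_of_getLast? hst hs ht) hs ht,
      by simpa [liftWalk, length_walkArcs] using hP⟩
  · rintro ⟨K, -, hk, F, hF, hshared⟩
    refine ⟨fun i => (F i).map (·.1.1) ++ [t], fun i => ?_, ?_⟩
    · obtain ⟨hK, hmulti, hP⟩ := hF i
      exact isDiWalk_of_isDiMultiWalk (fun e he => (hK e he).1) hmulti |>.imp_right
        fun h => ⟨h.1, h.2, by simpa using hP⟩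
    · refine le_trans (Set.ncard_le_ncard ?_ K.toFinite) hk
      exact setOf_sharedArc_subset (fun i => (hF i).1) (fun i => (hF i).2.1) hshared

theorem stmt1_general {V : Type*} [Fintype V] (A : V → V → Prop) (s t : V) (hst : s ≠ t)
    (p k : ℕ) :
    ((∃ W : Fin p → List V,
        (∀ i : Fin p, IsDiWalk A (W i) ∧ (W i).head? = some s ∧
          (W i).getLast? = some t) ∧
        {a : V × V | SharedArc W a}.ncard ≤ k) ↔
      (∃ K : Set (V × V), K ⊆ {a : V × V | A a.1 a.2} ∧ K.ncard ≤ k ∧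
        ∃ F : Fin p → List ((V × V) × Fin p),
          (∀ i : Fin p, (∀ e ∈ F i, MultiArcOK A K p e) ∧
            IsDiMultiWalk (fun e => e.1.1) (fun e => e.1.2) s t (F i)) ∧
          ∀ e : (V × V) × Fin p, ¬ SharedMultiArc F e))
    ∧
    (∀ α : ℕ, 1 ≤ α →
      ((∃ W : Fin p → List V,
          (∀ i : Fin p, IsDiWalk A (W i) ∧ (W i).head? = some s ∧
            (W i).getLast? = some t ∧ (W i).length ≤ α + 1) ∧
          {a : V × V | SharedArc W a}.ncard ≤ k) ↔
        (∃ K : Set (V × V), K ⊆ {a : V × V | A a.1 a.2} ∧ K.ncard ≤ k ∧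
          ∃ F : Fin p → List ((V × V) × Fin p),
            (∀ i : Fin p, (∀ e ∈ F i, MultiArcOK A K p e) ∧
              IsDiMultiWalk (fun e => e.1.1) (fun e => e.1.2) s t (F i) ∧
              (F i).length ≤ α) ∧
            ∀ e : (V × V) × Fin p, ¬ SharedMultiArc F e))) := by
  refine ⟨by simpa using walks_iff_multiWalks A hst p k (fun _ => True), fun α _ => ?_⟩
  simpa [Nat.sub_le_iff_le_add] using walks_iff_multiWalks A hst p k (· ≤ α)

/-- `G` admits `p` `s`-`t` walks sharing at most `k` arcs iff there
is `K ⊆ A` with `|K| ≤ k` such that `G(K,p)` admits `p` `s`-`t` walks sharing no arc;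
moreover, for any `α ≥ 1` the same equivalence holds when all walks are required to
have length at most `α`. -/
theorem stmt1 {V : Type*} [Fintype V] (A : V → V → Prop) (s t : V) (hst : s ≠ t)
    (p k : ℕ) (hp : 1 ≤ p) :
    ((∃ W : Fin p → List V,
        (∀ i : Fin p, IsDiWalk A (W i) ∧ (W i).head? = some s ∧
          (W i).getLast? = some t) ∧
        {a : V × V | SharedArc W a}.ncard ≤ k) ↔
      (∃ K : Set (V × V), K ⊆ {a : V × V | A a.1 a.2} ∧ K.ncard ≤ k ∧
        ∃ F : Fin p → List ((V × V) × Fin p),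
          (∀ i : Fin p, (∀ e ∈ F i, MultiArcOK A K p e) ∧
            IsDiMultiWalk (fun e => e.1.1) (fun e => e.1.2) s t (F i)) ∧
          ∀ e : (V × V) × Fin p, ¬ SharedMultiArc F e))
    ∧
    (∀ α : ℕ, 1 ≤ α →
      ((∃ W : Fin p → List V,
          (∀ i : Fin p, IsDiWalk A (W i) ∧ (W i).head? = some s ∧
            (W i).getLast? = some t ∧ (W i).length ≤ α + 1) ∧
          {a : V × V | SharedArc W a}.ncard ≤ k) ↔
        (∃ K : Set (V × V), K ⊆ {a : V × V | A a.1 a.2} ∧ K.ncard ≤ k ∧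
          ∃ F : Fin p → List ((V × V) × Fin p),
            (∀ i : Fin p, (∀ e ∈ F i, MultiArcOK A K p e) ∧
              IsDiMultiWalk (fun e => e.1.1) (fun e => e.1.2) s t (F i) ∧
              (F i).length ≤ α) ∧
            ∀ e : (V × V) × Fin p, ¬ SharedMultiArc F e))) :=
  stmt1_general A s t hst p k

end PaperRCA
end

section
/- Let U = {u₁,…,uₙ}, let F = {F₁,…,F_m} be a family of subsets of U, let ℓ ≤ m, and let G be the directed acyclic graph of the Set Cover construction. Then there exist at most ℓ sets in F whose union is U if and only if G admits n + m s-t walks sharing at most ℓ arcs. -/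
namespace PaperRCA

/-- Vertices of the Set Cover construction with universe size `n`, family size `m`
and budget `ℓ`: the source `s`, the sink `t`, element vertices `u i` (the `vᵢ`),
set vertices `f j` (the `wⱼ`), the internal vertices `cu i r` of the `(ℓ+1)`-chain
from `s` to `vᵢ`, and the internal vertices `cf j r` of the `(ℓ+2)`-chain from `s`
to `wⱼ`. -/
inductive SCVertex (n m ℓ : ℕ) where
  | s : SCVertex n m ℓ
  | t : SCVertex n m ℓ
  | u (i : Fin n) : SCVertex n m ℓ
  | f (j : Fin m) : SCVertex n m ℓ
  | cu (i : Fin n) (r : Fin ℓ) : SCVertex n m ℓ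
  | cf (j : Fin m) (r : Fin (ℓ + 1)) : SCVertex n m ℓ

/-- Arcs of the Set Cover construction for the family `F`. -/
def SCArc {n m ℓ : ℕ} (F : Fin m → Set (Fin n)) :
    SCVertex n m ℓ → SCVertex n m ℓ → Prop
  | .s, .cu _ r => (r : ℕ) = 0
  | .s, .u _ => ℓ = 0
  | .s, .cf _ r => (r : ℕ) = 0
  | .cu i r, .cu i' r' => i = i' ∧ (r' : ℕ) = (r : ℕ) + 1
  | .cu i r, .u i' => i = i' ∧ (r : ℕ) + 1 = ℓ
  | .cf j r, .cf j' r' => j = j' ∧ (r' : ℕ) = (r : ℕ) + 1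
  | .cf j r, .f j' => j = j' ∧ (r : ℕ) = ℓ
  | .u i, .f j => i ∈ F j
  | .f _, .t => True
  | _, _ => False


end PaperRCA

/-! Every arc raises the `depth` (the distance from `s`) by one, so an `s`-`t` walk has `ℓ + 4`
vertices, the one at index `r` being of depth `r`. At index `ℓ + 1` a walk visits `vᵢ` or the last
chain vertex before `w_j`. Up to that depth in-neighbours are unique, so two walks through the same
such vertex share their first `ℓ + 1` arcs; with at most `ℓ` shared arcs the `n + m` walks
therefore visit these `n + m` vertices one each. The walk through `vᵢ` continues by an arc
`(w_j, t)` with `uᵢ ∈ F_j`, which the walk along the chain to `w_j` uses at the same position, so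
these shared arcs give a cover by at most `ℓ` sets. Conversely, route each element through a set
of the cover and each set along its own chain: out-neighbours inside the chains are unique, so
walks sharing an earlier arc would meet at index `ℓ + 1`, and only arcs `(w_j, t)` with `F_j` in
the cover are shared. -/

namespace List

variable {α : Type*}

theorem exists_getElem?_of_getElem?_succ {l : List α} {r : ℕ} {y : α}
    (h : l[r + 1]? = some y) : ∃ x, l[r]? = some x :=
  ⟨l[r]'(by grind), by simp⟩

theorem isChain_cons_ofFn_append {R : α → α → Prop} {k : ℕ} {a : α} {g : Fin (k + 1) → α}
    {l : List α} (h₀ : R a (g 0)) (hg : ∀ r : Fin k, R (g r.castSucc) (g r.succ))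
    (hl : (g (Fin.last k) :: l).IsChain R) : (a :: (ofFn g ++ l)).IsChain R := by
  rw [ofFn_succ', concat_eq_append, append_assoc, singleton_append, isChain_cons_split,
    ← concat_eq_append, ← ofFn_succ']
  exact ⟨isChain_cons.2 ⟨by simpa using h₀, isChain_ofFn.2 fun r _ => hg ⟨r, by omega⟩⟩, hl⟩

end List

namespace PaperRCA

theorem walkArcs_getElem? {V : Type*} {l : List V} {r : ℕ} {a : V × V} :
    (walkArcs l)[r]? = some a ↔ l[r]? = some a.1 ∧ l[r + 1]? = some a.2 := by
  obtain ⟨x, y⟩ := a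
  rw [walkArcs, List.getElem?_zip_eq_some]
  simp [List.getElem?_tail]

namespace IsDiWalk

variable {V : Type*} {A : V → V → Prop} {W : List V}

theorem rel_of_getElem? (hW : IsDiWalk A W) {r : ℕ} {x y : V} (hx : W[r]? = some x)
    (hy : W[r + 1]? = some y) : A x y := by
  obtain ⟨hr, rfl⟩ := List.getElem?_eq_some_iff.1 hy
  obtain ⟨_, rfl⟩ := List.getElem?_eq_some_iff.1 hx
  exact List.IsChain.getElem hW.2 r hr

theorem apply_eq_add_of_getElem? (hW : IsDiWalk A W) (d : V → ℕ)
    (hd : ∀ ⦃x y⦄, A x y → d y = d x + 1) {x₀ : V} (h₀ : W.head? = some x₀) {r : ℕ} {x : V}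
    (hx : W[r]? = some x) : d x = d x₀ + r := by
  induction r generalizing x with
  | zero => simp_all [List.head?_eq_getElem?]
  | succ r ih =>
    obtain ⟨z, hz⟩ := List.exists_getElem?_of_getElem?_succ hx
    rw [hd (hW.rel_of_getElem? hz hx), ih hz, Nat.add_assoc]

end IsDiWalk

variable {n m ℓ : ℕ}

def SCVertex.ofCode :
    Bool ⊕ Fin n ⊕ Fin m ⊕ (Fin n × Fin ℓ) ⊕ (Fin m × Fin (ℓ + 1)) → SCVertex n m ℓ
  | .inl true => .s
  | .inl false => .t
  | .inr (.inl i) => .u i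
  | .inr (.inr (.inl j)) => .f j
  | .inr (.inr (.inr (.inl (i, r)))) => .cu i r
  | .inr (.inr (.inr (.inr (j, r)))) => .cf j r

instance : Finite (SCVertex n m ℓ) :=
  .of_surjective SCVertex.ofCode fun v => by
    cases v with
    | s => exact ⟨.inl true, rfl⟩
    | t => exact ⟨.inl false, rfl⟩
    | u i => exact ⟨.inr (.inl i), rfl⟩
    | f j => exact ⟨.inr (.inr (.inl j)), rfl⟩
    | cu i r => exact ⟨.inr (.inr (.inr (.inl (i, r)))), rfl⟩
    | cf j r => exact ⟨.inr (.inr (.inr (.inr (j, r)))), rfl⟩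

def depth : SCVertex n m ℓ → ℕ
  | .s => 0
  | .cu _ r => r + 1
  | .u _ => ℓ + 1
  | .cf _ r => r + 1
  | .f _ => ℓ + 2
  | .t => ℓ + 3

-- The vertices at depth `ℓ + 1`: `vᵢ`, and the last internal vertex of the chain to `w_j`.
def midVertex : Fin n ⊕ Fin m → SCVertex n m ℓ :=
  Sum.elim .u (fun j => .cf j (Fin.last ℓ))

theorem midVertex_injective : Function.Injective (midVertex (n := n) (m := m) (ℓ := ℓ)) := by
  rintro (i | j) (i' | j') h <;> simp_all [midVertex]

theorem depth_midVertex (p : Fin n ⊕ Fin m) : depth (midVertex (ℓ := ℓ) p) = ℓ + 1 := by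
  cases p <;> rfl

variable {F : Fin m → Set (Fin n)} {x x' y y' : SCVertex n m ℓ}

theorem exists_midVertex_of_depth (h : depth x = ℓ + 1) : ∃ p, x = midVertex p := by
  cases x with
  | u i => exact ⟨.inl i, rfl⟩
  | cf j r => exact ⟨.inr j, by simp_all [depth, midVertex, Fin.ext_iff]⟩
  | _ => simp only [depth] at h; omega

theorem exists_eq_f_of_depth (h : depth x = ℓ + 2) : ∃ j, x = .f j := by
  cases x <;> simp only [depth] at h <;> first | omega | exact ⟨_, rfl⟩

theorem eq_t_of_depth (h : depth x = ℓ + 3) : x = .t := by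
  cases x <;> simp only [depth] at h <;> first | omega | rfl

theorem SCArc.depth_eq (h : SCArc F x y) : depth y = depth x + 1 := by
  cases x <;> cases y <;> simp_all [SCArc, depth]

theorem SCArc.left_unique (h : SCArc F x y) (h' : SCArc F x' y) (hy : depth y ≤ ℓ + 1) :
    x = x' := by
  cases x <;> cases x' <;> cases y <;> simp only [SCArc, depth] at h h' hy <;> grind

theorem SCArc.right_unique (h : SCArc F x y) (h' : SCArc F x y') (hx : 1 ≤ depth x)
    (hx' : depth x ≤ ℓ) : y = y' := by
  cases x <;> cases y <;> cases y' <;> simp only [SCArc, depth] at h h' hx hx' <;> grind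

variable (F) in
def IsSTWalk (W : List (SCVertex n m ℓ)) : Prop :=
  IsDiWalk (SCArc F) W ∧ W.head? = some .s ∧ W.getLast? = some .t

namespace IsSTWalk

variable {W W' : List (SCVertex n m ℓ)}

theorem depth_of_getElem? (hW : IsSTWalk F W) {r : ℕ} (hx : W[r]? = some x) : depth x = r := by
  simpa [depth] using hW.1.apply_eq_add_of_getElem? depth (fun _ _ => SCArc.depth_eq) hW.2.1 hx

theorem length_eq (hW : IsSTWalk F W) : W.length = ℓ + 4 := by
  have hne : W.length ≠ 0 := by simpa using hW.1.1
  have hlast : W[W.length - 1]? = some .t := by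
    rw [← List.getLast?_eq_getElem?]; exact hW.2.2
  have := hW.depth_of_getElem? hlast
  simp only [depth] at this
  omega

theorem getElem?_depth_of_mem (hW : IsSTWalk F W) (hx : x ∈ W) : W[depth x]? = some x := by
  obtain ⟨r, hr, rfl⟩ := List.getElem_of_mem hx
  rw [hW.depth_of_getElem? (List.getElem?_eq_getElem hr)]
  exact List.getElem?_eq_getElem hr

theorem exists_getElem? (hW : IsSTWalk F W) {r : ℕ} (hr : r < ℓ + 4) : ∃ x, W[r]? = some x :=
  ⟨W[r]'(hW.length_eq ▸ hr), by simp⟩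

theorem exists_mid (hW : IsSTWalk F W) : ∃ p, W[ℓ + 1]? = some (midVertex p) := by
  obtain ⟨x, hx⟩ := hW.exists_getElem? (r := ℓ + 1) (by omega)
  obtain ⟨p, rfl⟩ := exists_midVertex_of_depth (hW.depth_of_getElem? hx)
  exact ⟨p, hx⟩

theorem exists_exit (hW : IsSTWalk F W) :
    ∃ j, W[ℓ + 2]? = some (.f j) ∧ W[ℓ + 3]? = some .t := by
  obtain ⟨x, hx⟩ := hW.exists_getElem? (r := ℓ + 2) (by omega)
  obtain ⟨y, hy⟩ := hW.exists_getElem? (r := ℓ + 3) (by omega)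
  obtain ⟨j, rfl⟩ := exists_eq_f_of_depth (hW.depth_of_getElem? hx)
  exact ⟨j, hx, eq_t_of_depth (hW.depth_of_getElem? hy) ▸ hy⟩

theorem getElem?_eq_of_mid_eq (hW : IsSTWalk F W) (hW' : IsSTWalk F W')
    (h : W[ℓ + 1]? = W'[ℓ + 1]?) {r : ℕ} (hr : r ≤ ℓ + 1) : W[r]? = W'[r]? := by
  induction hr using Nat.decreasingInduction with
  | self => exact h
  | of_succ k hk ih =>
    obtain ⟨x, hx⟩ := hW.exists_getElem? (r := k) (by omega)
    obtain ⟨x', hx'⟩ := hW'.exists_getElem? (r := k) (by omega)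
    obtain ⟨y, hy⟩ := hW.exists_getElem? (r := k + 1) (by omega)
    have hdy : depth y = k + 1 := hW.depth_of_getElem? hy
    rw [hx, hx', SCArc.left_unique (hW.1.rel_of_getElem? hx hy)
      (hW'.1.rel_of_getElem? hx' (ih ▸ hy)) (by omega)]

theorem mid_eq_of_getElem?_eq (hW : IsSTWalk F W) (hW' : IsSTWalk F W') {r : ℕ}
    (h₁ : 1 ≤ r) (h₂ : r ≤ ℓ + 1) (h : W[r]? = W'[r]?) : W[ℓ + 1]? = W'[ℓ + 1]? := by
  induction h₂ using Nat.decreasingInduction with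
  | self => exact h
  | of_succ k hk ih =>
    obtain ⟨x, hx⟩ := hW.exists_getElem? (r := k) (by omega)
    obtain ⟨y, hy⟩ := hW.exists_getElem? (r := k + 1) (by omega)
    obtain ⟨y', hy'⟩ := hW'.exists_getElem? (r := k + 1) (by omega)
    have hdx : depth x = k := hW.depth_of_getElem? hx
    have hyy' : y = y' := SCArc.right_unique (hW.1.rel_of_getElem? hx hy)
      (hW'.1.rel_of_getElem? (h ▸ hx) hy') (by omega) (by omega)
    exact ih (by omega) (by rw [hy, hy', hyy'])

theorem mid_eq_of_walkArcs (hW : IsSTWalk F W) (hW' : IsSTWalk F W') {r : ℕ}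
    {a : SCVertex n m ℓ × SCVertex n m ℓ} (h : (walkArcs W)[r]? = some a)
    (h' : (walkArcs W')[r]? = some a) (hr : r ≤ ℓ + 1) : W[ℓ + 1]? = W'[ℓ + 1]? := by
  rw [walkArcs_getElem?] at h h'
  rcases Nat.lt_or_eq_of_le hr with hr | rfl
  · exact hW.mid_eq_of_getElem?_eq hW' (r := r + 1) (by omega) (by omega) (h.2.trans h'.2.symm)
  · rw [h.1, h'.1]

theorem le_of_walkArcs (hW : IsSTWalk F W) {r : ℕ} {a : SCVertex n m ℓ × SCVertex n m ℓ}
    (h : (walkArcs W)[r]? = some a) : r ≤ ℓ + 2 := by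
  have := (List.getElem?_eq_some_iff.1 (walkArcs_getElem?.1 h).2).1
  rw [hW.length_eq] at this
  omega

end IsSTWalk

theorem le_ncard_sharedArc_of_mid_eq {p : ℕ} {W : Fin p → List (SCVertex n m ℓ)}
    (hW : ∀ q, IsSTWalk F (W q)) {q q' : Fin p} (hne : q ≠ q')
    (h : (W q)[ℓ + 1]? = (W q')[ℓ + 1]?) : ℓ + 1 ≤ {a | SharedArc W a}.ncard := by
  have hshared : ∀ r : Fin (ℓ + 1), ∃ a, (walkArcs (W q))[(r : ℕ)]? = some a ∧
      (walkArcs (W q'))[(r : ℕ)]? = some a := by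
    intro r
    obtain ⟨x, hx⟩ := (hW q).exists_getElem? (r := r) (by omega)
    obtain ⟨y, hy⟩ := (hW q).exists_getElem? (r := r + 1) (by omega)
    refine ⟨(x, y), walkArcs_getElem?.2 ⟨hx, hy⟩, walkArcs_getElem?.2 ⟨?_, ?_⟩⟩
    · rwa [← (hW q).getElem?_eq_of_mid_eq (hW q') h (by omega)]
    · rwa [← (hW q).getElem?_eq_of_mid_eq (hW q') h (by omega)]
  choose g hg using hshared
  have hg_inj : Function.Injective g := fun r r' hrr' => by
    have hr := (hW q).depth_of_getElem? (walkArcs_getElem?.1 (hg r).1).1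
    have hr' := (hW q).depth_of_getElem? (walkArcs_getElem?.1 (hg r').1).1
    exact Fin.ext (hr.symm.trans (hrr' ▸ hr'))
  calc ℓ + 1 = (Set.range g).ncard := by simp [Set.ncard_range_of_injective hg_inj]
    _ ≤ _ := Set.ncard_le_ncard (by rintro _ ⟨r, rfl⟩; exact ⟨q, q', hne, r, hg r⟩)

theorem exists_cover_of_ncard_sharedArc_le {W : Fin (n + m) → List (SCVertex n m ℓ)}
    (hW : ∀ q, IsSTWalk F (W q)) (hshared : {a | SharedArc W a}.ncard ≤ ℓ) :
    ∃ S : Finset (Fin m), S.card ≤ ℓ ∧ ∀ i : Fin n, ∃ j ∈ S, i ∈ F j := by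
  choose κ hκ using fun q => (hW q).exists_mid
  have hκ_inj : Function.Injective κ := fun q q' hqq' => by
    by_contra hne
    have := le_ncard_sharedArc_of_mid_eq hW hne (by rw [hκ, hκ, hqq'])
    omega
  have hκ_bij : Function.Bijective κ :=
    (Fintype.bijective_iff_injective_and_card κ).2 ⟨hκ_inj, by simp⟩
  have hcover : ∀ i, ∃ j, i ∈ F j ∧ SharedArc W (.f j, .t) := by
    intro i
    obtain ⟨q, hq⟩ := hκ_bij.2 (.inl i)
    obtain ⟨j, hj, hjt⟩ := (hW q).exists_exit
    obtain ⟨q', hq'⟩ := hκ_bij.2 (.inr j)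
    obtain ⟨j', hj', hj't⟩ := (hW q').exists_exit
    have hij : i ∈ F j := by
      simpa [SCArc, midVertex, hq] using (hW q).1.rel_of_getElem? (hκ q) hj
    have hjj' : j' = j := by
      simpa [SCArc, midVertex, hq', eq_comm] using (hW q').1.rel_of_getElem? (hκ q') hj'
    refine ⟨j, hij, q, q', fun h => by simp [h, hq'] at hq, ℓ + 2,
      walkArcs_getElem?.2 ⟨hj, hjt⟩, walkArcs_getElem?.2 ⟨hjj' ▸ hj', hj't⟩⟩
  choose σ hσF hσ using hcover
  refine ⟨Finset.univ.image σ, ?_, fun i => ⟨σ i, by simp, hσF i⟩⟩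
  calc (Finset.univ.image σ).card = (↑(Finset.univ.image σ) : Set (Fin m)).ncard :=
        (Set.ncard_coe_finset _).symm
    _ ≤ {a | SharedArc W a}.ncard :=
        Set.ncard_le_ncard_of_injOn (fun j => (SCVertex.f j, SCVertex.t))
          (by simpa using hσ) (fun _ _ _ _ h => by simpa using h)
    _ ≤ ℓ := hshared

-- `laneVertex p r` is the vertex at index `r + 1` of a walk through `midVertex p`.
def laneVertex : Fin n ⊕ Fin m → Fin (ℓ + 1) → SCVertex n m ℓ
  | .inl i, r => if h : (r : ℕ) < ℓ then .cu i ⟨r, h⟩ else .u i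
  | .inr j, r => .cf j r

def routeWalk (σ : Fin n → Fin m) (p : Fin n ⊕ Fin m) : List (SCVertex n m ℓ) :=
  .s :: (List.ofFn (laneVertex p) ++ [.f (Sum.elim σ id p), .t])

theorem isSTWalk_routeWalk {σ : Fin n → Fin m} (hσ : ∀ i, i ∈ F (σ i)) (p : Fin n ⊕ Fin m) :
    IsSTWalk F (routeWalk (ℓ := ℓ) σ p) := by
  refine ⟨⟨by simp [routeWalk], ?_⟩, by simp [routeWalk],
    by simp [routeWalk, List.getLast?_cons, -List.ofFn_succ]⟩
  apply List.isChain_cons_ofFn_append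
  · cases p with
    | inl i => by_cases hℓ : 0 < ℓ <;> simp_all [laneVertex, SCArc]
    | inr j => simp [laneVertex, SCArc]
  · intro r
    cases p with
    | inl i => by_cases hr : (r : ℕ) + 1 < ℓ <;> simp [laneVertex, SCArc, hr]; omega
    | inr j => simp [laneVertex, SCArc]
  · cases p <;> simp [laneVertex, SCArc, hσ]

theorem routeWalk_mid {σ : Fin n → Fin m} (hσ : ∀ i, i ∈ F (σ i)) (p : Fin n ⊕ Fin m) :
    (routeWalk (ℓ := ℓ) σ p)[ℓ + 1]? = some (midVertex p) := by
  rw [← depth_midVertex p]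
  refine (isSTWalk_routeWalk hσ p).getElem?_depth_of_mem ?_
  cases p <;> simp [routeWalk, laneVertex, midVertex, -List.ofFn_succ, List.mem_ofFn]
  exact ⟨Fin.last ℓ, le_rfl⟩

theorem routeWalk_exit {σ : Fin n → Fin m} (hσ : ∀ i, i ∈ F (σ i)) (p : Fin n ⊕ Fin m) :
    (routeWalk (ℓ := ℓ) σ p)[ℓ + 2]? = some (.f (Sum.elim σ id p)) :=
  (isSTWalk_routeWalk hσ p).getElem?_depth_of_mem (x := .f _) (by simp [routeWalk])

theorem exists_eq_f_t_of_sharedArc_routeWalk {σ : Fin n → Fin m} (hσ : ∀ i, i ∈ F (σ i))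
    {p : ℕ} {e : Fin p → Fin n ⊕ Fin m} (he : Function.Injective e)
    {a : SCVertex n m ℓ × SCVertex n m ℓ} (ha : SharedArc (routeWalk σ ∘ e) a) :
    ∃ i, a = (.f (σ i), .t) := by
  obtain ⟨q, q', hne, r, h, h'⟩ := ha
  have hne' : e q ≠ e q' := he.ne hne
  simp only [Function.comp_apply] at h h'
  generalize e q = p at h hne'
  generalize e q' = p' at h' hne'
  have hW := isSTWalk_routeWalk (ℓ := ℓ) hσ p
  have hW' := isSTWalk_routeWalk (ℓ := ℓ) hσ p'
  have hr : r = ℓ + 2 := by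
    have := hW.le_of_walkArcs h
    by_contra hr
    have hmid := hW.mid_eq_of_walkArcs hW' h h' (by omega)
    rw [routeWalk_mid hσ, routeWalk_mid hσ] at hmid
    exact hne' (midVertex_injective (Option.some_injective _ hmid))
  subst hr
  obtain ⟨h₁, h₂⟩ := walkArcs_getElem?.1 h
  obtain ⟨h₁', -⟩ := walkArcs_getElem?.1 h'
  rw [routeWalk_exit hσ] at h₁ h₁'
  have ha : a = (.f (Sum.elim σ id p), .t) :=
    Prod.ext (Option.some_injective _ h₁).symm (eq_t_of_depth (hW.depth_of_getElem? h₂))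
  have hexit : Sum.elim σ id p = Sum.elim σ id p' := by simpa using h₁.trans h₁'.symm
  rcases p with i | j
  · exact ⟨i, ha⟩
  rcases p' with i' | j'
  · exact ⟨i', ha.trans (by simpa using hexit)⟩
  · simp_all

theorem ncard_sharedArc_routeWalk_le {σ : Fin n → Fin m} (hσ : ∀ i, i ∈ F (σ i))
    {S : Finset (Fin m)} (hσS : ∀ i, σ i ∈ S) :
    {a | SharedArc (routeWalk (ℓ := ℓ) σ ∘ finSumFinEquiv.symm) a}.ncard ≤ S.card := by
  calc {a | SharedArc (routeWalk (ℓ := ℓ) σ ∘ finSumFinEquiv.symm) a}.ncard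
      ≤ ((fun j => (SCVertex.f j, SCVertex.t)) '' (S : Set (Fin m))).ncard := by
        refine Set.ncard_le_ncard fun a ha => ?_
        obtain ⟨i, rfl⟩ :=
          exists_eq_f_t_of_sharedArc_routeWalk hσ finSumFinEquiv.symm.injective ha
        exact ⟨σ i, hσS i, rfl⟩
    _ ≤ (S : Set (Fin m)).ncard := Set.ncard_image_le
    _ = S.card := Set.ncard_coe_finset S

theorem stmt2_general (n m ℓ : ℕ) (F : Fin m → Set (Fin n)) :
    (∃ S : Finset (Fin m), S.card ≤ ℓ ∧ ∀ i : Fin n, ∃ j ∈ S, i ∈ F j) ↔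
    (∃ W : Fin (n + m) → List (SCVertex n m ℓ),
      (∀ q : Fin (n + m), IsDiWalk (SCArc F) (W q) ∧
        (W q).head? = some SCVertex.s ∧ (W q).getLast? = some SCVertex.t) ∧
      {a : SCVertex n m ℓ × SCVertex n m ℓ | SharedArc W a}.ncard ≤ ℓ) := by
  constructor
  · rintro ⟨S, hS, hcover⟩
    choose σ hσS hσ using hcover
    exact ⟨_, fun q => isSTWalk_routeWalk hσ _, (ncard_sharedArc_routeWalk_le hσ hσS).trans hS⟩
  · rintro ⟨W, hW, hshared⟩
    exact exists_cover_of_ncard_sharedArc_le hW hshared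

/-- There are at most `ℓ` sets in the family `F` whose union is the
universe iff the DAG of the Set Cover construction admits `n + m` `s`-`t` walks
sharing at most `ℓ` arcs. -/
theorem stmt2 (n m ℓ : ℕ) (hℓ : ℓ ≤ m) (F : Fin m → Set (Fin n)) :
    (∃ S : Finset (Fin m), S.card ≤ ℓ ∧ ∀ i : Fin n, ∃ j ∈ S, i ∈ F j) ↔
    (∃ W : Fin (n + m) → List (SCVertex n m ℓ),
      (∀ q : Fin (n + m), IsDiWalk (SCArc F) (W q) ∧
        (W q).head? = some SCVertex.s ∧ (W q).getLast? = some SCVertex.t) ∧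
      {a : SCVertex n m ℓ × SCVertex n m ℓ | SharedArc W a}.ncard ≤ ℓ) :=
  stmt2_general n m ℓ F

end PaperRCA
end

section
/- Every s-t walk in the directed acyclic graph G of the Set Cover construction has length exactly ℓ + 3; in particular, every s-t walk in G has length at most ℓ + 3. -/
/-!
Grade the vertices by their distance from `s` along the chains (`s` at 0, `vᵢ` at `ℓ + 1`,
`wⱼ` at `ℓ + 2`, `t` at `ℓ + 3`). Every arc raises the grade by exactly one, so the length
of any walk is the difference of the grades of its ends.
-/

namespace PaperRCA

def level {n m ℓ : ℕ} : SCVertex n m ℓ → ℕ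
  | .s => 0
  | .cu _ r => r + 1
  | .u _ => ℓ + 1
  | .cf _ r => r + 1
  | .f _ => ℓ + 2
  | .t => ℓ + 3

theorem level_of_scArc {n m ℓ : ℕ} (F : Fin m → Set (Fin n)) {a b : SCVertex n m ℓ}
    (h : SCArc F a b) : level b = level a + 1 := by
  cases a <;> cases b <;> simp_all [SCArc, level]

theorem _root_.List.IsChain.getLast_add_one_eq {V : Type*} {A : V → V → Prop} (f : V → ℕ)
    (hf : ∀ a b, A a b → f b = f a + 1) :
    ∀ {w : List V}, w.IsChain A → ∀ hne : w ≠ [],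
      f (w.getLast hne) + 1 = f (w.head hne) + w.length
  | [], _, hne => absurd rfl hne
  | [_], _, _ => rfl
  | a :: b :: w, hw, _ => by
    rw [List.isChain_cons_cons] at hw
    have ih := hw.2.getLast_add_one_eq f hf (List.cons_ne_nil b w)
    rw [List.getLast_cons (List.cons_ne_nil b w), ih]
    simp only [List.head_cons, List.length_cons, hf a b hw.1]
    omega

theorem stmt3_general (n m ℓ : ℕ) (F : Fin m → Set (Fin n))
    (w : List (SCVertex n m ℓ)) (hw : IsDiWalk (SCArc F) w)
    (hs : w.head? = some SCVertex.s) (ht : w.getLast? = some SCVertex.t) :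
    w.length = ℓ + 4 := by
  obtain ⟨hne, hchain⟩ := hw
  have key := hchain.getLast_add_one_eq level (fun _ _ => level_of_scArc F) hne
  rw [List.head?_eq_some_head hne, Option.some.injEq] at hs
  rw [List.getLast?_eq_some_getLast hne, Option.some.injEq] at ht
  rw [hs, ht] at key
  simp only [level] at key
  omega

/-- Every `s`-`t` walk in the DAG of the Set Cover construction has
length exactly `ℓ + 3` (a walk on a vertex list `w` has length `w.length - 1`, so
this says `w.length = ℓ + 4`); in particular every `s`-`t` walk has length at most
`ℓ + 3`. -/
theorem stmt3 (n m ℓ : ℕ) (hℓ : ℓ ≤ m) (F : Fin m → Set (Fin n))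
    (w : List (SCVertex n m ℓ)) (hw : IsDiWalk (SCArc F) w)
    (hs : w.head? = some SCVertex.s) (ht : w.getLast? = some SCVertex.t) :
    w.length = ℓ + 4 :=
  stmt3_general n m ℓ F w hw hs ht

end PaperRCA
end

section
/- Let G be a connected undirected graph with distinct vertices s and t, and let p ≥ 1. Then G admits p s-t walks sharing no edge if and only if the degree of s in G is at least p. -/
/-!
Distinct walks must start with distinct edges `s x`, so `p ≤ deg s`. Conversely, fix an
`s`-`t` path `s q ⋯ t` with `m` edges and distinct neighbours `f 0 = q, f 1, …, f (p-1)` of `s`.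
Walk `i` first goes back and forth `m * i` times along `s (f i)` and then follows the path.
At any position, two such walks are either both still shuttling (on different edges), or at
most one is on the path, since the path windows `[2 m i, 2 m i + m)` are disjoint. A walk on
the path meets `s` only in its first edge `s q`, and among the shuttle edges only that of walk
`0`, which does not shuttle at all, equals `s q`.
-/

namespace PaperRCA

/-- A walk in an undirected (simple) graph `G`: a nonempty list of vertices in which
consecutive vertices are adjacent. -/
def IsGWalk {V : Type*} (G : SimpleGraph V) (w : List V) : Prop :=
  w ≠ [] ∧ w.Chain' G.Adj

/-- The list of (unordered) edges of a walk. -/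
def walkEdges {V : Type*} (w : List V) : List (Sym2 V) :=
  (w.zip w.tail).map (fun q => s(q.1, q.2))

/-- An edge `e` is shared by the family of walks `W` if it occurs at the same
position in two distinct walks of the family. -/
def SharedEdge {V : Type*} {p : ℕ} (W : Fin p → List V) (e : Sym2 V) : Prop :=
  ∃ i j : Fin p, i ≠ j ∧ ∃ r : ℕ,
    (walkEdges (W i))[r]? = some e ∧ (walkEdges (W j))[r]? = some e

section WalkEdges

variable {V : Type*}

lemma length_walkEdges (w : List V) : (walkEdges w).length = w.length - 1 := by
  simp [walkEdges]

lemma exists_of_getElem?_walkEdges_eq_some {w : List V} {r : ℕ} {e : Sym2 V}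
    (h : (walkEdges w)[r]? = some e) :
    ∃ a b, w[r]? = some a ∧ w[r + 1]? = some b ∧ e = s(a, b) := by
  rw [walkEdges, List.getElem?_map, Option.map_eq_some_iff] at h
  obtain ⟨⟨a, b⟩, hab, rfl⟩ := h
  rw [List.getElem?_zip_eq_some, List.getElem?_tail] at hab
  exact ⟨a, b, hab.1, hab.2, rfl⟩

lemma eq_zero_of_getElem?_walkEdges_eq_some_of_mem {s : V} {l : List V} (hl : (s :: l).Nodup)
    {r : ℕ} {e : Sym2 V} (h : (walkEdges (s :: l))[r]? = some e) (hs : s ∈ e) : r = 0 := by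
  obtain ⟨a, b, ha, hb, rfl⟩ := exists_of_getElem?_walkEdges_eq_some h
  have hs0 : (s :: l)[0]? = some s := rfl
  rcases Sym2.mem_iff.1 hs with rfl | rfl
  · exact ((List.getElem?_inj (by simp) hl).1 (hs0.trans ha.symm)).symm
  · exact absurd ((List.getElem?_inj (by simp) hl).1 (hs0.trans hb.symm)) (by omega)

lemma exists_adj_getElem?_walkEdges_zero {G : SimpleGraph V} {w : List V} {s t : V}
    (hw : IsGWalk G w) (hs : w.head? = some s) (ht : w.getLast? = some t) (hst : s ≠ t) :
    ∃ b, G.Adj s b ∧ (walkEdges w)[0]? = some s(s, b) := by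
  match w, hw, hs, ht with
  | [], hw, _, _ => exact absurd rfl hw.1
  | [a], _, hs, ht => simp_all
  | a :: b :: l, hw, hs, _ =>
    obtain rfl : a = s := Option.some_inj.1 hs
    exact ⟨b, (List.isChain_cons_cons.1 hw.2).1, rfl⟩

end WalkEdges

theorem le_degree_of_forall_not_sharedEdge {V : Type*} [Fintype V] {G : SimpleGraph V}
    [DecidableRel G.Adj] {s : V} {p : ℕ} {W : Fin p → List V}
    (hW : ∀ i, ∃ b, G.Adj s b ∧ (walkEdges (W i))[0]? = some s(s, b))
    (hshared : ∀ e, ¬ SharedEdge W e) : p ≤ G.degree s := by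
  choose b hadj hb using hW
  have hinj : Set.InjOn b (Finset.univ : Finset (Fin p)) := by
    intro i _ j _ hij
    by_contra hne
    exact hshared _ ⟨i, j, hne, 0, hb i, hij ▸ hb j⟩
  simpa using Finset.card_le_card_of_injOn (t := G.neighborFinset s) b
    (fun i _ => (G.mem_neighborFinset s _).2 (hadj i)) hinj

section Shuttle

variable {V : Type*}

def shuttle (s n : V) (l : List V) : ℕ → List V
  | 0 => l
  | k + 1 => n :: s :: shuttle s n l k

lemma getLast?_cons_shuttle (s n : V) (l : List V) :
    ∀ k, (s :: shuttle s n l k).getLast? = (s :: l).getLast?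
  | 0 => rfl
  | k + 1 => by
    rw [shuttle, List.getLast?_cons_cons, List.getLast?_cons_cons, getLast?_cons_shuttle s n l k]

lemma isChain_cons_shuttle {r : V → V → Prop} {s n : V} {l : List V} (hsn : r s n) (hns : r n s)
    (hl : (s :: l).IsChain r) : ∀ k, (s :: shuttle s n l k).IsChain r
  | 0 => hl
  | k + 1 => List.isChain_cons_cons.2 ⟨hsn, List.isChain_cons_cons.2
      ⟨hns, isChain_cons_shuttle hsn hns hl k⟩⟩

lemma walkEdges_cons_shuttle (s n : V) (l : List V) :
    ∀ k, walkEdges (s :: shuttle s n l k) = List.replicate (2 * k) s(s, n) ++ walkEdges (s :: l)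
  | 0 => rfl
  | k + 1 => by
    change s(s, n) :: s(n, s) :: walkEdges (s :: shuttle s n l k) = _
    rw [walkEdges_cons_shuttle s n l k, Sym2.eq_swap, Nat.mul_succ, List.replicate_succ,
      List.replicate_succ]
    rfl

lemma getElem?_walkEdges_cons_shuttle (s n : V) (l : List V) (k r : ℕ) :
    (walkEdges (s :: shuttle s n l k))[r]? =
      if r < 2 * k then some s(s, n) else (walkEdges (s :: l))[r - 2 * k]? := by
  rw [walkEdges_cons_shuttle, List.getElem?_append]
  split_ifs <;> simp_all

theorem not_sharedEdge_cons_shuttle {n : ℕ} {s q : V} {l : List V}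
    (hl : (s :: q :: l).Nodup) {f : Fin (n + 1) → V} (hf : Function.Injective f) (hf0 : f 0 = q)
    (e : Sym2 V) :
    ¬ SharedEdge (fun i => s :: shuttle s (f i) (q :: l) ((q :: l).length * i)) e := by
  set m := (q :: l).length
  rintro ⟨i, j, hij, r, hi, hj⟩
  wlog hlt : i < j generalizing i j
  · exact this j i hij.symm hj hi (lt_of_le_of_ne (not_lt.1 hlt) hij.symm)
  have hgap : 2 * (m * i) + m ≤ 2 * (m * j) := by
    have : m * (i + 1) ≤ m * j := Nat.mul_le_mul_left m hlt
    linarith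
  simp only [getElem?_walkEdges_cons_shuttle] at hi hj
  split_ifs at hi with hri
  · rw [if_pos (by omega), ← hi, Option.some_inj, Sym2.congr_right] at hj
    exact hij (hf hj.symm)
  · have hr : r - 2 * (m * i) < m := by
      simpa [length_walkEdges, m] using (List.getElem?_eq_some_iff.1 hi).1
    rw [if_pos (by omega), Option.some_inj] at hj
    have hr0 := eq_zero_of_getElem?_walkEdges_eq_some_of_mem hl hi (hj ▸ Sym2.mem_mk_left _ _)
    rw [hr0, ← hj] at hi
    have hjq : f j = q := Sym2.congr_right.1 (Option.some_inj.1 hi).symm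
    exact (Fin.zero_le i).trans_lt hlt |>.ne' (hf (hjq.trans hf0.symm))

end Shuttle

theorem exists_injective_fin_adj_zero_eq {V : Type*} [Fintype V] {G : SimpleGraph V}
    [DecidableRel G.Adj] {s q : V} (hq : G.Adj s q) {n : ℕ} (hn : n + 1 ≤ G.degree s) :
    ∃ f : Fin (n + 1) → V, Function.Injective f ∧ (∀ i, G.Adj s (f i)) ∧ f 0 = q := by
  classical
  have hcard : Fintype.card (Fin n) ≤ ((G.neighborFinset s).erase q).card := by
    rw [Fintype.card_fin, Finset.card_erase_of_mem ((G.mem_neighborFinset s q).2 hq),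
      G.card_neighborFinset_eq_degree]
    omega
  obtain ⟨g, hg⟩ := Function.Embedding.exists_of_card_le_finset hcard
  have hg' : ∀ i, G.Adj s (g i) ∧ g i ≠ q := fun i => by simpa using hg (Set.mem_range_self i)
  refine ⟨Fin.cons q g, Fin.cons_injective_iff.2 ⟨?_, g.injective⟩,
    Fin.cases hq fun i => (hg' i).1, rfl⟩
  rintro ⟨i, hi⟩
  exact (hg' i).2 hi

theorem _root_.SimpleGraph.Connected.exists_nodup_isChain_cons_cons {V : Type*}
    {G : SimpleGraph V} (hG : G.Connected) {s t : V} (hst : s ≠ t) :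
    ∃ q l, (s :: q :: l).IsChain G.Adj ∧ (s :: q :: l).Nodup ∧
      (s :: q :: l).getLast? = some t := by
  obtain ⟨P, hP⟩ := hG.exists_isPath s t
  cases P with
  | nil => exact absurd rfl hst
  | @cons _ q _ h P' =>
    refine ⟨q, P'.support.tail, ?_⟩
    rw [P'.cons_tail_support, ← SimpleGraph.Walk.support_cons h]
    refine ⟨SimpleGraph.Walk.isChain_adj_support _, hP.support_nodup, ?_⟩
    rw [List.getLast?_eq_some_getLast (SimpleGraph.Walk.support_ne_nil _),
      SimpleGraph.Walk.getLast_support]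

/-- A connected undirected graph `G` with distinct vertices
`s, t` admits `p` `s`-`t` walks sharing no edge iff the degree of `s` is at
least `p`. -/
theorem stmt12 {V : Type*} [Fintype V] (G : SimpleGraph V) [DecidableRel G.Adj]
    (hconn : G.Connected) (s t : V) (hst : s ≠ t) (p : ℕ) (hp : 1 ≤ p) :
    (∃ W : Fin p → List V,
      (∀ i : Fin p, IsGWalk G (W i) ∧ (W i).head? = some s ∧
        (W i).getLast? = some t) ∧
      ∀ e : Sym2 V, ¬ SharedEdge W e) ↔
    p ≤ G.degree s := by
  constructor
  · rintro ⟨W, hW, hshared⟩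
    exact le_degree_of_forall_not_sharedEdge
      (fun i => exists_adj_getElem?_walkEdges_zero (hW i).1 (hW i).2.1 (hW i).2.2 hst) hshared
  · intro hdeg
    obtain ⟨n, rfl⟩ := Nat.exists_eq_add_of_le' hp
    obtain ⟨q, l, hchain, hnodup, hlast⟩ := hconn.exists_nodup_isChain_cons_cons hst
    obtain ⟨f, hf, hadj, hf0⟩ :=
      exists_injective_fin_adj_zero_eq (List.isChain_cons_cons.1 hchain).1 hdeg
    refine ⟨fun i => s :: shuttle s (f i) (q :: l) ((q :: l).length * i), fun i => ?_,
      not_sharedEdge_cons_shuttle hnodup hf hf0⟩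
    exact ⟨⟨List.cons_ne_nil _ _, isChain_cons_shuttle (hadj i) (hadj i).symm hchain _⟩, rfl,
      (getLast?_cons_shuttle _ _ _ _).trans hlast⟩

end PaperRCA
end

section
/- Let G be a finite directed graph with distinct vertices s and t, let p ≥ 1 and k ≥ 0, and let d_t = max{ dist_G(v, t) : v ∈ V(G), dist_G(v, t) < ∞ }, the maximum finite directed distance to t. If G admits p s-t walks sharing at most k arcs, then G admits p s-t walks sharing at most k arcs in which every walk has length at most p · d_t. -/
/-!
Induct on the total length of the walks: as long as some walk is longer than `p d_t`, one walk
of the family can be replaced by a strictly shorter `s`-`t` walk without creating new shared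
arcs. For a position `q` of a walk `w`, let `σ_w(q) = q + dist(w_q, t)`, the length of the walk
that follows `w` up to `q` and then a shortest path to `t`. Unless a long walk `W_i` can simply be
truncated at an early visit of `t`, `σ` climbs along `W_i` from `dist(s, t) ≤ d_t` to
`|W_i| > p d_t` in steps of at most `d_t`, so it takes `p` distinct values `β ≤ p d_t`; one of
them is the length of no walk of the family. Let `m` be the last position at which some walk
`W_l` has `σ = β`, and reroute `W_l` from `m` along a shortest path. If an arc of that path at a
position `r ≥ m` were also the `r`-th arc of some `W_j`, then `σ_{W_j}` would equal `β` at `r`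
and at `r + 1`, contradicting the choice of `m`.
-/

namespace PaperRCA

/-- `v` can reach `t` in the digraph `A`. -/
def DiReach {V : Type*} (A : V → V → Prop) (v t : V) : Prop :=
  ∃ w : List V, IsDiWalk A w ∧ w.head? = some v ∧ w.getLast? = some t

/-- The directed distance from `v` to `t` in the digraph `A`: the length of a
shortest directed walk (equivalently, path) from `v` to `t` (junk value if none
exists). -/
noncomputable def diDist {V : Type*} (A : V → V → Prop) (v t : V) : ℕ :=
  sInf {ℓ : ℕ | ∃ w : List V, IsDiWalk A w ∧ w.head? = some v ∧
    w.getLast? = some t ∧ w.length = ℓ + 1}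

/-- `d_t`: the maximum, over all vertices `v` from which `t` is reachable, of the
directed distance from `v` to `t`. -/
noncomputable def maxDistTo {V : Type*} (A : V → V → Prop) (t : V) : ℕ :=
  sSup ((fun v => diDist A v t) '' {v : V | DiReach A v t})


section Walks

variable {V : Type*} {A : V → V → Prop}

def IsDiWalkFromTo (A : V → V → Prop) (u v : V) (w : List V) : Prop :=
  IsDiWalk A w ∧ w.head? = some u ∧ w.getLast? = some v

theorem walkArcs_getElem?_eq_some {w : List V} {r : ℕ} {a : V × V} :
    (walkArcs w)[r]? = some a ↔ w[r]? = some a.1 ∧ w[r + 1]? = some a.2 := by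
  rw [walkArcs, List.getElem?_zip_eq_some, List.getElem?_tail]

namespace IsDiWalkFromTo

variable {u v x : V} {w : List V}

theorem length_pos (hw : IsDiWalkFromTo A u v w) : 0 < w.length :=
  List.length_pos_iff.2 hw.1.1

theorem getElem?_zero (hw : IsDiWalkFromTo A u v w) : w[0]? = some u := by
  rw [← List.head?_eq_getElem?]; exact hw.2.1

theorem getElem?_length_sub_one (hw : IsDiWalkFromTo A u v w) : w[w.length - 1]? = some v := by
  rw [← List.getLast?_eq_getElem?]; exact hw.2.2

theorem take {q : ℕ} (hw : IsDiWalkFromTo A u v w) (hq : w[q]? = some x) :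
    IsDiWalkFromTo A u x (w.take (q + 1)) := by
  have hlt : q < w.length := (List.getElem?_eq_some_iff.1 hq).1
  have hlen : (w.take (q + 1)).length = q + 1 := by simp; omega
  refine ⟨⟨List.ne_nil_of_length_pos (by omega), hw.1.2.take _⟩, ?_, ?_⟩
  · rw [List.head?_take, if_neg (by omega), hw.2.1]
  · rw [List.getLast?_eq_getElem?, hlen, Nat.add_sub_cancel, List.getElem?_take,
      if_pos (by omega), hq]

theorem drop {q : ℕ} (hw : IsDiWalkFromTo A u v w) (hq : w[q]? = some x) :
    IsDiWalkFromTo A x v (w.drop q) := by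
  have hlt : q < w.length := (List.getElem?_eq_some_iff.1 hq).1
  refine ⟨⟨List.ne_nil_of_length_pos (by simp; omega), hw.1.2.drop _⟩, ?_, ?_⟩
  · rw [List.head?_drop, hq]
  · rw [List.getLast?_drop, if_neg (by omega), hw.2.2]

theorem append {w' : List V} (hw : IsDiWalkFromTo A u v w) (hw' : IsDiWalkFromTo A v x w') :
    IsDiWalkFromTo A u x (w ++ w'.tail) := by
  obtain ⟨l, rfl⟩ : ∃ l, w' = v :: l := by
    obtain ⟨⟨hne, -⟩, hh, -⟩ := hw'
    cases w' with
    | nil => exact absurd rfl hne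
    | cons y l => exact ⟨l, by simpa using hh⟩
  have hchain := List.isChain_cons.1 hw'.1.2
  refine ⟨⟨by simp [hw.1.1], List.isChain_append.2 ⟨hw.1.2, hchain.2, ?_⟩⟩, ?_, ?_⟩
  · rw [hw.2.2]
    rintro _ ⟨⟩ y hy
    exact hchain.1 y hy
  · rw [List.head?_append, hw.2.1]; rfl
  · cases l with
    | nil =>
      obtain rfl : v = x := by simpa using hw'.2.2
      simpa using hw.2.2
    | cons y l => simpa [List.getLast?_append] using hw'.2.2

end IsDiWalkFromTo

end Walks

section Distance

variable {V : Type*} {A : V → V → Prop} {u v x t : V} {w : List V} {q : ℕ}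

theorem diDist_add_one_le_length (hw : IsDiWalkFromTo A v t w) : diDist A v t + 1 ≤ w.length := by
  have hpos := hw.length_pos
  have := Nat.sInf_le (s := {ℓ : ℕ | ∃ w : List V, IsDiWalk A w ∧ w.head? = some v ∧
    w.getLast? = some t ∧ w.length = ℓ + 1}) (m := w.length - 1)
    ⟨w, hw.1, hw.2.1, hw.2.2, by omega⟩
  rw [diDist]; omega

theorem exists_walk_length_eq_diDist (h : DiReach A v t) :
    ∃ w, IsDiWalkFromTo A v t w ∧ w.length = diDist A v t + 1 := by
  obtain ⟨w, hw⟩ := h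
  have hpos := List.length_pos_iff.2 hw.1.1
  obtain ⟨w', hw', hh, hl, hlen⟩ := Nat.sInf_mem (s := {ℓ : ℕ | ∃ w : List V,
    IsDiWalk A w ∧ w.head? = some v ∧ w.getLast? = some t ∧ w.length = ℓ + 1})
    ⟨w.length - 1, w, hw.1, hw.2.1, hw.2.2, by omega⟩
  exact ⟨w', ⟨hw', hh, hl⟩, hlen⟩

theorem diDist_self (A : V → V → Prop) (t : V) : diDist A t t = 0 := by
  have := diDist_add_one_le_length (A := A) (w := [t]) ⟨⟨by simp, .singleton _⟩, rfl, rfl⟩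
  simpa using this

theorem eq_of_diDist_eq_zero (h : DiReach A v t) (h0 : diDist A v t = 0) : v = t := by
  obtain ⟨w, hw, hlen⟩ := exists_walk_length_eq_diDist h
  obtain ⟨y, rfl⟩ := List.length_eq_one_iff.1 (hlen.trans (by rw [h0]))
  have hv : y = v := by simpa using hw.2.1
  have ht : y = t := by simpa using hw.2.2
  exact hv ▸ ht

theorem diDist_le_maxDistTo [Finite V] (h : DiReach A v t) : diDist A v t ≤ maxDistTo A t :=
  le_csSup (Set.toFinite _).bddAbove ⟨v, h, rfl⟩

namespace IsDiWalkFromTo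

theorem diReach (hw : IsDiWalkFromTo A u t w) (hq : w[q]? = some x) : DiReach A x t :=
  ⟨_, hw.drop hq⟩

theorem add_diDist_lt_length (hw : IsDiWalkFromTo A u t w) (hq : w[q]? = some x) :
    q + diDist A x t < w.length := by
  have := diDist_add_one_le_length (hw.drop hq)
  simp at this; omega

theorem diDist_le_add_diDist (hw : IsDiWalkFromTo A u v w) (hq : w[q]? = some x)
    (hx : DiReach A x t) : diDist A u t ≤ q + diDist A x t := by
  obtain ⟨P, hP, hPlen⟩ := exists_walk_length_eq_diDist hx
  have hlt : q < w.length := (List.getElem?_eq_some_iff.1 hq).1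
  have := diDist_add_one_le_length ((hw.take hq).append hP)
  rw [List.length_append, List.length_take, List.length_tail] at this
  omega

end IsDiWalkFromTo

/-- Every suffix of a shortest walk is a shortest walk. -/
theorem exists_shortest_walk (h : DiReach A v t) :
    ∃ w, IsDiWalkFromTo A v t w ∧ w.length = diDist A v t + 1 ∧
      ∀ q x, w[q]? = some x → q + diDist A x t = diDist A v t := by
  obtain ⟨w, hw, hlen⟩ := exists_walk_length_eq_diDist h
  refine ⟨w, hw, hlen, fun q x hq =>
    le_antisymm ?_ (hw.diDist_le_add_diDist hq (hw.diReach hq))⟩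
  have := hw.add_diDist_lt_length hq
  omega

end Distance

section Rerouting

variable {V : Type*} {A : V → V → Prop} {s t x : V} {w : List V} {q : ℕ}

theorem getElem?_take_append_tail_of_le {P : List V} {m n : ℕ} (hm : m < w.length)
    (hn : n ≤ m) : (w.take (m + 1) ++ P.tail)[n]? = w[n]? := by
  have htake : n < (w.take (m + 1)).length := by simp; omega
  rw [List.getElem?_append_left htake, List.getElem?_take, if_pos (by omega)]

theorem getElem?_take_append_tail_of_ge {P : List V} {m n : ℕ} (hm : m < w.length)
    (hP : P.head? = w[m]?) (hn : m ≤ n) :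
    (w.take (m + 1) ++ P.tail)[n]? = P[n - m]? := by
  rcases hn.eq_or_lt with rfl | hlt
  · rw [getElem?_take_append_tail_of_le hm le_rfl, Nat.sub_self, ← List.head?_eq_getElem?, hP]
  · have htake : (w.take (m + 1)).length = m + 1 := by simp; omega
    rw [List.getElem?_append_right (by omega), List.getElem?_tail, htake]
    congr 1; omega

noncomputable def shortcutLength (A : V → V → Prop) (t : V) (w : List V) (q : ℕ) : ℕ :=
  q + diDist A (w.getD q t) t

theorem shortcutLength_of_getElem? (h : w[q]? = some x) :
    shortcutLength A t w q = q + diDist A x t := by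
  simp [shortcutLength, List.getD_eq_getElem?_getD, h]

def OnlySharesSharedArcs {p : ℕ} (W : Fin p → List V) (i : Fin p) (N : List V) : Prop :=
  ∀ j ≠ i, ∀ (r : ℕ) (a : V × V),
    (walkArcs N)[r]? = some a → (walkArcs (W j))[r]? = some a → SharedArc W a

theorem OnlySharesSharedArcs.sharedArc {p : ℕ} {W : Fin p → List V} {i : Fin p} {N : List V}
    (hN : OnlySharesSharedArcs W i N) {a : V × V} (ha : SharedArc (Function.update W i N) a) :
    SharedArc W a := by
  obtain ⟨j, k, hjk, r, hj, hk⟩ := ha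
  rcases eq_or_ne j i with rfl | hji
  · rw [Function.update_self, Function.update_of_ne hjk.symm] at *
    exact hN k hjk.symm r a hj hk
  rcases eq_or_ne k i with rfl | hki
  · rw [Function.update_self, Function.update_of_ne hji] at *
    exact hN j hji r a hk hj
  · rw [Function.update_of_ne hji] at hj
    rw [Function.update_of_ne hki] at hk
    exact ⟨j, k, hjk, r, hj, hk⟩

theorem onlySharesSharedArcs_take {p : ℕ} (W : Fin p → List V) (i : Fin p) (n : ℕ) :
    OnlySharesSharedArcs W i ((W i).take n) := by
  intro j hji r a hi hj
  refine ⟨i, j, hji.symm, r, walkArcs_getElem?_eq_some.2 ?_, hj⟩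
  obtain ⟨h1, h2⟩ := walkArcs_getElem?_eq_some.1 hi
  rw [List.getElem?_take] at h1 h2
  split_ifs at h1 h2
  exact ⟨h1, h2⟩

theorem exists_reroute {p : ℕ} {W : Fin p → List V} (hW : ∀ i, IsDiWalkFromTo A s t (W i))
    {i : Fin p} (hq : q < (W i).length)
    (hβ : ∀ l, (W l).length ≠ shortcutLength A t (W i) q + 1) :
    ∃ l N, IsDiWalkFromTo A s t N ∧ N.length < (W l).length ∧ OnlySharesSharedArcs W l N := by
  classical
  set β := shortcutLength A t (W i) q
  set Attained : ℕ → Prop := fun n =>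
    ∃ l, n < (W l).length ∧ shortcutLength A t (W l) n = β
  have hle : ∀ n, Attained n → n ≤ β := by
    rintro n ⟨l, -, hl⟩
    rw [← hl, shortcutLength]; omega
  set m := Nat.findGreatest Attained β
  have hmax : ∀ n, Attained n → n ≤ m := fun n hn => Nat.le_findGreatest (hle n hn) hn
  obtain ⟨l, hml, hmβ⟩ : Attained m :=
    Nat.findGreatest_spec (hle q ⟨i, hq, rfl⟩) ⟨i, hq, rfl⟩
  have hz : (W l)[m]? = some (W l)[m] := List.getElem?_eq_getElem hml
  set z := (W l)[m]
  rw [shortcutLength_of_getElem? hz] at hmβ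
  obtain ⟨P, hP, hPlen, hPdist⟩ := exists_shortest_walk ((hW l).diReach hz)
  have hlong := (hW l).add_diDist_lt_length hz
  have hlen := hβ l
  refine ⟨l, (W l).take (m + 1) ++ P.tail, ((hW l).take hz).append hP, ?_, ?_⟩
  · rw [List.length_append, List.length_take, List.length_tail]; omega
  intro j hjl r a hN hj
  have hPm : P.head? = (W l)[m]? := hP.2.1.trans hz.symm
  obtain ⟨hN1, hN2⟩ := walkArcs_getElem?_eq_some.1 hN
  obtain ⟨hj1, hj2⟩ := walkArcs_getElem?_eq_some.1 hj
  by_cases hrm : r < m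
  · rw [getElem?_take_append_tail_of_le hml hrm.le] at hN1
    rw [getElem?_take_append_tail_of_le hml hrm] at hN2
    exact ⟨l, j, hjl.symm, r, walkArcs_getElem?_eq_some.2 ⟨hN1, hN2⟩, hj⟩
  rw [getElem?_take_append_tail_of_ge hml hPm (by omega)] at hN1 hN2
  have hd1 := hPdist _ _ hN1
  have hd2 := hPdist _ _ hN2
  have hr := hmax r ⟨j, (List.getElem?_eq_some_iff.1 hj1).1, by
    rw [shortcutLength_of_getElem? hj1]; omega⟩
  have hr1 := hmax (r + 1) ⟨j, (List.getElem?_eq_some_iff.1 hj2).1, by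
    rw [shortcutLength_of_getElem? hj2]; omega⟩
  omega

end Rerouting

theorem exists_lt_le_add_of_succ_le_add {f : ℕ → ℕ} {d a n : ℕ}
    (hstep : ∀ q < n, f (q + 1) ≤ f q + d) (h0 : f 0 ≤ a + d) (hn : a < f n) :
    ∃ q ≤ n, a < f q ∧ f q ≤ a + d := by
  induction n with
  | zero => exact ⟨0, le_rfl, hn, h0⟩
  | succ n ih =>
    by_cases h : a < f n
    · obtain ⟨q, hq, hfq⟩ := ih (fun q hq => hstep q (by omega)) h
      exact ⟨q, by omega, hfq⟩
    · exact ⟨n + 1, le_rfl, hn, by have := hstep n (by omega); omega⟩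

theorem exists_forall_ne_of_injective {ι α : Type*} [Finite ι] {f : ι → α}
    (hf : Function.Injective f) (g : ι → α) (i : ι) : ∃ c, ∀ j ≠ i, g j ≠ f c := by
  by_contra! h
  choose σ hσi hσ using h
  have hσinj : Function.Injective σ := fun c c' hcc' => hf (by rw [← hσ, ← hσ, hcc'])
  obtain ⟨c, hc⟩ := Finite.injective_iff_surjective.1 hσinj i
  exact hσi c hc

section ShortWalks

variable {V : Type*} [Finite V] {A : V → V → Prop} {s t : V} {w : List V} {q : ℕ}

/-- `w_q ≠ t` is at distance at least `1` from `t`, and `w_{q+1}` at distance at most `d_t`. -/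
theorem shortcutLength_succ_le (hw : IsDiWalkFromTo A s t w) (hq : q + 1 < w.length)
    (hqt : w[q]? ≠ some t) :
    shortcutLength A t w (q + 1) ≤ shortcutLength A t w q + maxDistTo A t := by
  have hx : w[q]? = some w[q] := List.getElem?_eq_getElem (by omega)
  have hy : w[q + 1]? = some w[q + 1] := List.getElem?_eq_getElem hq
  have hpos : diDist A w[q] t ≠ 0 := fun h0 =>
    hqt (hx.trans (congrArg some (eq_of_diDist_eq_zero (hw.diReach hx) h0)))
  have hle := diDist_le_maxDistTo (hw.diReach hy)
  rw [shortcutLength_of_getElem? hx, shortcutLength_of_getElem? hy]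
  omega

/-- Each interval `(c d, (c + 1) d]` with `c < p` contains a shortcut length. -/
theorem exists_injective_shortcutLength {p : ℕ} (hw : IsDiWalkFromTo A s t w)
    (hwt : ∀ q, q + 1 < w.length → w[q]? ≠ some t)
    (hlong : p * maxDistTo A t + 1 < w.length) :
    ∃ q : Fin p → ℕ, Function.Injective (fun c => shortcutLength A t w (q c)) ∧
      ∀ c, q c < w.length ∧ shortcutLength A t w (q c) ≤ p * maxDistTo A t := by
  set d := maxDistTo A t
  have h0 : shortcutLength A t w 0 ≤ d := by
    rw [shortcutLength_of_getElem? hw.getElem?_zero, zero_add]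
    exact diDist_le_maxDistTo ⟨w, hw⟩
  have hend : shortcutLength A t w (w.length - 1) = w.length - 1 := by
    rw [shortcutLength_of_getElem? hw.getElem?_length_sub_one, diDist_self, add_zero]
  have hstair : ∀ c : Fin p, ∃ q ≤ w.length - 1,
      c * d < shortcutLength A t w q ∧ shortcutLength A t w q ≤ c * d + d := by
    intro c
    refine exists_lt_le_add_of_succ_le_add (fun q hq => ?_) (by omega) ?_
    · exact shortcutLength_succ_le hw (by omega) (hwt q (by omega))
    · rw [hend]
      have := Nat.mul_le_mul_right d c.isLt.le
      omega
  choose q hq hlo hhi using hstair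
  have hle : ∀ c c' : Fin p, shortcutLength A t w (q c) = shortcutLength A t w (q c') →
      (c : ℕ) ≤ c' := fun c c' h =>
    Nat.lt_succ_iff.1 <| Nat.lt_of_mul_lt_mul_right (a := d) <| by
      have := hlo c; have := hhi c'; rw [Nat.succ_mul]; omega
  refine ⟨q, fun c c' h => Fin.ext (le_antisymm (hle c c' h) (hle c' c h.symm)),
    fun c => ⟨by have := hq c; omega, ?_⟩⟩
  have := Nat.mul_le_mul_right d (Nat.succ_le_of_lt c.isLt)
  have := hhi c
  rw [Nat.succ_mul] at *
  omega

theorem exists_shorter_replacement {p : ℕ} {W : Fin p → List V}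
    (hW : ∀ i, IsDiWalkFromTo A s t (W i)) {i : Fin p}
    (hi : p * maxDistTo A t + 1 < (W i).length) :
    ∃ l N, IsDiWalkFromTo A s t N ∧ N.length < (W l).length ∧ OnlySharesSharedArcs W l N := by
  by_cases hwt : ∃ q, q + 1 < (W i).length ∧ (W i)[q]? = some t
  · obtain ⟨q, hq, hqt⟩ := hwt
    exact ⟨i, _, (hW i).take hqt, by simp; omega, onlySharesSharedArcs_take W i _⟩
  push Not at hwt
  obtain ⟨q, hinj, hq⟩ := exists_injective_shortcutLength (hW i) hwt hi
  obtain ⟨c, hc⟩ := exists_forall_ne_of_injective (Nat.succ_injective.comp hinj)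
    (fun l => (W l).length) i
  refine exists_reroute hW (hq c).1 fun l => ?_
  rcases eq_or_ne l i with rfl | hli
  · have := (hq c).2; omega
  · exact hc l hli

theorem exists_short_walks {p : ℕ} (W : Fin p → List V)
    (hW : ∀ i, IsDiWalkFromTo A s t (W i)) :
    ∃ W' : Fin p → List V,
      (∀ i, IsDiWalkFromTo A s t (W' i) ∧ (W' i).length ≤ p * maxDistTo A t + 1) ∧
      ∀ a, SharedArc W' a → SharedArc W a := by
  induction hn : ∑ i, (W i).length using Nat.strong_induction_on generalizing W with
  | _ n ih =>
  by_cases hshort : ∀ i, (W i).length ≤ p * maxDistTo A t + 1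
  · exact ⟨W, fun i => ⟨hW i, hshort i⟩, fun _ => id⟩
  push Not at hshort
  obtain ⟨i, hi⟩ := hshort
  obtain ⟨l, N, hN, hNl, hshared⟩ := exists_shorter_replacement hW hi
  classical
  have hlt : ∑ j, (Function.update W l N j).length < n := hn ▸ Finset.sum_lt_sum
    (fun j _ => by rcases eq_or_ne j l with rfl | hjl <;> simp [hNl.le, *])
    ⟨l, Finset.mem_univ _, by simpa using hNl⟩
  obtain ⟨W', hW', hsub⟩ := ih _ hlt (Function.update W l N)
    (fun j => by rcases eq_or_ne j l with rfl | hjl <;> simp [*]) rfl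
  exact ⟨W', hW', fun a ha => hshared.sharedArc (hsub a ha)⟩

end ShortWalks

theorem stmt14_general {V : Type*} [Fintype V] (A : V → V → Prop) (s t : V)
    (p k : ℕ)
    (h : ∃ W : Fin p → List V,
      (∀ i : Fin p, IsDiWalk A (W i) ∧ (W i).head? = some s ∧
        (W i).getLast? = some t) ∧
      {a : V × V | SharedArc W a}.ncard ≤ k) :
    ∃ W : Fin p → List V,
      (∀ i : Fin p, IsDiWalk A (W i) ∧ (W i).head? = some s ∧
        (W i).getLast? = some t ∧ (W i).length ≤ p * maxDistTo A t + 1) ∧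
      {a : V × V | SharedArc W a}.ncard ≤ k := by
  obtain ⟨W, hW, hk⟩ := h
  obtain ⟨W', hW', hsub⟩ := exists_short_walks W hW
  refine ⟨W', fun i => ⟨(hW' i).1.1, (hW' i).1.2.1, (hW' i).1.2.2, (hW' i).2⟩, ?_⟩
  exact (Set.ncard_le_ncard hsub (Set.toFinite _)).trans hk

/-- If a finite digraph `G` with distinct vertices `s, t` admits
`p` `s`-`t` walks sharing at most `k` arcs, then it admits `p` `s`-`t` walks
sharing at most `k` arcs in which every walk has length at most `p · d_t` (a walk
on a vertex list `w` has length `w.length - 1`). -/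
theorem stmt14 {V : Type*} [Fintype V] (A : V → V → Prop) (s t : V) (hst : s ≠ t)
    (p k : ℕ) (hp : 1 ≤ p)
    (h : ∃ W : Fin p → List V,
      (∀ i : Fin p, IsDiWalk A (W i) ∧ (W i).head? = some s ∧
        (W i).getLast? = some t) ∧
      {a : V × V | SharedArc W a}.ncard ≤ k) :
    ∃ W : Fin p → List V,
      (∀ i : Fin p, IsDiWalk A (W i) ∧ (W i).head? = some s ∧
        (W i).getLast? = some t ∧ (W i).length ≤ p * maxDistTo A t + 1) ∧
      {a : V × V | SharedArc W a}.ncard ≤ k :=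
  stmt14_general A s t p k h

end PaperRCA
end
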